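/- Let (I,J) be an instance of Variable-Sized Bin Covering with unit supply such that NFD's solution has exactly one well-covered bin and every other bin is empty in NFD's solution. Then OPT(I,J) ≤ (9/4)·NFD(I,J). -/

import Mathlib

open scoped Classical

noncomputable section

namespace BinCov

/-- Profit of a solution `S` on the bin set `B`: a bin `i ∈ B` earns profit `p i`
if the total size of the items assigned to it is at least its demand `d i`. -/
def profit (d p s : ℕ → ℝ) (B : Finset ℕ) (S : ℕ → Finset ℕ) : ℝ :=
  ∑ i ∈ B, if d i ≤ ∑ j ∈ S i, s j then p i else 0

/-- A solution assigns pairwise disjoint subsets of the item set `T` to the bins. -/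
def IsSolution (T : Finset ℕ) (S : ℕ → Finset ℕ) : Prop :=
  (∀ i, S i ⊆ T) ∧ Pairwise fun i i' => Disjoint (S i) (S i')

/-- Optimal profit over all solutions on bins `B` and items `T`. -/
def OPT (d p s : ℕ → ℝ) (B T : Finset ℕ) : ℝ :=
  sSup (profit d p s B '' {S | IsSolution T S})

/-- Take a minimal prefix of `items` whose total size reaches `dem`;
returns this prefix together with the remaining items. -/
def takeFill (s : ℕ → ℝ) : ℝ → List ℕ → List ℕ × List ℕ
  | _, [] => ([], [])
  | dem, j :: rest =>
    if dem ≤ s j then ([j], rest)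
    else
      let q := takeFill s (dem - s j) rest
      (j :: q.1, q.2)

/-- Next Fit Decreasing on the list `bins` of bins and the list `items` of still
unassigned items (both by index, i.e. in non-increasing order of demand resp. size):
if the unassigned items cannot cover the current bin, it is left empty; otherwise a
minimal prefix of the unassigned items is assigned to it.  Returns, for each bin,
the set of items assigned to it. -/
def nfdAux (d s : ℕ → ℝ) : List ℕ → List ℕ → ℕ → Finset ℕ
  | [], _, _ => ∅
  | i :: bins, items, b =>
    if d i ≤ (items.map s).sum then
      let q := takeFill s (d i) items
      if b = i then q.1.toFinset else nfdAux d s bins q.2 b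
    else
      if b = i then ∅ else nfdAux d s bins items b

/-- The solution produced by NFD on bin set `B` and item set `T` (bins and items are
processed in increasing order of index; demands and sizes are non-increasing in the index). -/
def nfdSol (d s : ℕ → ℝ) (B T : Finset ℕ) : ℕ → Finset ℕ :=
  nfdAux d s (B.sort (· ≤ ·)) (T.sort (· ≤ ·))

/-- The total size `u i` that NFD assigns to bin `i`. -/
def nfdU (d s : ℕ → ℝ) (B T : Finset ℕ) (i : ℕ) : ℝ :=
  ∑ j ∈ nfdSol d s B T i, s j

/-- The profit NFD earns (Variable-Sized Bin Covering: the profit of a bin is its demand). -/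
def NFD (d s : ℕ → ℝ) (B T : Finset ℕ) : ℝ :=
  profit d d s B (nfdSol d s B T)

/-- A bin `istar` with `u istar > 0` in NFD's solution (bins `0,…,m-1`, items `T`) is
well-covered if for the smallest index `i' > istar` with `u i' = 0` (which must exist)
one has `u i ≤ 2 * d i` for all bins `i ≤ i'`. -/
def WellCovered (d s : ℕ → ℝ) (m : ℕ) (T : Finset ℕ) (istar : ℕ) : Prop :=
  istar < m ∧ 0 < nfdU d s (Finset.range m) T istar ∧
    ∃ i', istar < i' ∧ i' < m ∧ nfdU d s (Finset.range m) T i' = 0 ∧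
      (∀ i, istar < i → i < i' → nfdU d s (Finset.range m) T i ≠ 0) ∧
      ∀ i ≤ i', nfdU d s (Finset.range m) T i ≤ 2 * d i

/-- `istar` is the head of the instance: letting `i0` be the smallest index of a non-empty
bin of NFD's solution that is not well-covered, and `i1 ≥ i0` the smallest index with
`u (i1+1) = 0`, the head is the largest index `istar ≤ i1` with `u istar > 2 * d istar`. -/
def IsHead (d s : ℕ → ℝ) (m : ℕ) (T : Finset ℕ) (istar : ℕ) : Prop :=
  ∃ i0 i1,
    i0 < m ∧ 0 < nfdU d s (Finset.range m) T i0 ∧ ¬ WellCovered d s m T i0 ∧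
    (∀ i < i0, 0 < nfdU d s (Finset.range m) T i → WellCovered d s m T i) ∧
    i0 ≤ i1 ∧ nfdU d s (Finset.range m) T (i1 + 1) = 0 ∧
    (∀ i, i0 ≤ i → i < i1 → nfdU d s (Finset.range m) T (i + 1) ≠ 0) ∧
    istar ≤ i1 ∧ 2 * d istar < nfdU d s (Finset.range m) T istar ∧
    (∀ i ≤ i1, 2 * d i < nfdU d s (Finset.range m) T i → i ≤ istar)

/-- The inner loop of `ALG*` on one bin: `dcap` is the bin's demand (items are admissible iff
their size is at most `dcap`), `space` is the part of the demand not yet covered, and `rem j`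
is the still unassigned part of item `j` (items `0,…,n-1`, sizes non-increasing in the index).
While the bin is not covered and some admissible item is not fully assigned, the largest such
item (i.e. the one of smallest index) is taken and its remaining part is assigned to the bin,
splitting it so that the bin is exactly covered if it would overflow.
Returns the updated remainders together with the total amount assigned to the bin. -/
def fillBin (s : ℕ → ℝ) (n : ℕ) (dcap : ℝ) : ℕ → ℝ → (ℕ → ℝ) → (ℕ → ℝ) × ℝ
  | 0, _, rem => (rem, 0)
  | fuel + 1, space, rem =>
    if h : ∃ j, j < n ∧ s j ≤ dcap ∧ 0 < rem j then
      let j := Nat.find h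
      if rem j ≤ space then
        let q := fillBin s n dcap fuel (space - rem j) (Function.update rem j 0)
        (q.1, q.2 + rem j)
      else
        (Function.update rem j (rem j - space), space)
    else (rem, 0)

/-- The outer loop of `ALG*`: the bins are processed in the given order (non-increasing
efficiency); returns the total amount assigned to each bin. -/
def algStarFillAux (d s : ℕ → ℝ) (n : ℕ) : List ℕ → (ℕ → ℝ) → ℕ → ℝ
  | [], _, _ => 0
  | i :: bins, rem, b =>
    let q := fillBin s n (d i) n (d i) rem
    if b = i then q.2 else algStarFillAux d s n bins q.1 b

/-- The total amount `ALG*` assigns to each bin, on the instance with bins `0,…,m-1`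
(in non-increasing order of efficiency) and items `0,…,n-1` (in non-increasing order of size). -/
def algStarFill (m n : ℕ) (d s : ℕ → ℝ) : ℕ → ℝ :=
  algStarFillAux d s n (List.range m) fun j => if j < n then s j else 0

/-- The modified profit `p*` of the solution produced by `ALG*`. -/
def algStarPStar (m n : ℕ) (d p s : ℕ → ℝ) : ℝ :=
  ∑ i ∈ Finset.range m, p i * min (algStarFill m n d s i / d i) 1

/-- The optimum of the linear program for the modified Bin Covering problem. -/
def LPOpt (m n : ℕ) (d p s : ℕ → ℝ) : ℝ :=
  sSup {v : ℝ | ∃ y : ℕ → ℝ, ∃ x : ℕ → ℕ → ℝ,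
    (∀ i < m, y i ≤ (∑ j ∈ Finset.range n, x j i) / d i) ∧
    (∀ j < n, ∑ i ∈ Finset.range m, x j i ≤ s j) ∧
    (∀ i, 0 ≤ y i ∧ y i ≤ 1) ∧
    (∀ j i, 0 ≤ x j i) ∧
    (∀ j < n, ∀ i < m, d i < s j → x j i = 0) ∧
    v = ∑ i ∈ Finset.range m, p i * y i}

/-- A solution of the modified Bin Covering problem, assigning item parts from the
finite set `P` (part `q ∈ P` belongs to item `itm q`) to the bins `0,…,m-1`;
a part may only be assigned to a bin to which its item is admissible. -/
def IsPartSolution (m : ℕ) (d s : ℕ → ℝ) (itm : ℕ → ℕ) (P : Finset ℕ) (S : ℕ → Finset ℕ) : Prop :=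
  (∀ i, S i ⊆ P) ∧ (Pairwise fun i i' => Disjoint (S i) (S i')) ∧
  (∀ i < m, ∀ q ∈ S i, s (itm q) ≤ d i) ∧ (∀ i, m ≤ i → S i = ∅)

/-- The modified profit `p*` of a solution, where `psz q` is the size of part `q`. -/
def pStarParts (m : ℕ) (d p psz : ℕ → ℝ) (S : ℕ → Finset ℕ) : ℝ :=
  ∑ i ∈ Finset.range m, p i * min ((∑ q ∈ S i, psz q) / d i) 1

/-- A solution of the modified Bin Covering problem is maximal if there are no two distinct
bins `i`, `i'` with `0 < s(S_i) < d_i`, `0 < s(S_i') < d_i'` and `e_i ≤ e_i'` such that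
some item of `S_i` is admissible to bin `i'`. -/
def MaximalMod (m : ℕ) (d p s : ℕ → ℝ) (S : ℕ → Finset ℕ) : Prop :=
  ¬ ∃ i i', i < m ∧ i' < m ∧ i ≠ i' ∧
      (0 < ∑ j ∈ S i, s j) ∧ (∑ j ∈ S i, s j) < d i ∧
      (0 < ∑ j ∈ S i', s j) ∧ (∑ j ∈ S i', s j) < d i' ∧
      p i / d i ≤ p i' / d i' ∧ ∃ j ∈ S i, s j ≤ d i'

/-- A solution induced by a matching in the bipartite graph on bins and items with an
edge `ij` whenever `s j > d i`: every bin receives at most one item, and any item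
assigned to a bin covers it singularly. -/
def IsMatchingSol (m n : ℕ) (d s : ℕ → ℝ) (S : ℕ → Finset ℕ) : Prop :=
  IsSolution (Finset.range n) S ∧ (∀ i, (S i).card ≤ 1) ∧ ∀ i < m, ∀ j ∈ S i, d i < s j

end BinCov

namespace BinCov


/-! ### Auxiliary lemmas -/

lemma takeFill_nil (s : ℕ → ℝ) (dem : ℝ) : takeFill s dem [] = ([], []) := rfl

lemma takeFill_cons (s : ℕ → ℝ) (dem : ℝ) (j : ℕ) (rest : List ℕ) :
    takeFill s dem (j :: rest) =
      if dem ≤ s j then ([j], rest)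
      else (j :: (takeFill s (dem - s j) rest).1, (takeFill s (dem - s j) rest).2) := rfl

lemma takeFill_append (s : ℕ → ℝ) : ∀ (dem : ℝ) (l : List ℕ),
    (takeFill s dem l).1 ++ (takeFill s dem l).2 = l
  | _, [] => rfl
  | dem, j :: rest => by
    rw [takeFill_cons]
    split_ifs
    · rfl
    · simpa using takeFill_append s (dem - s j) rest

lemma takeFill_cover (s : ℕ → ℝ) : ∀ (dem : ℝ) (l : List ℕ),
    dem ≤ (l.map s).sum → dem ≤ (((takeFill s dem l).1).map s).sum
  | dem, [], h => by simpa [takeFill_nil] using h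
  | dem, j :: rest, h => by
    rw [takeFill_cons]
    split_ifs with hc
    · simpa
    · have := takeFill_cover s (dem - s j) rest (by simp at h; linarith)
      simp only [List.map_cons, List.sum_cons]
      linarith

lemma takeFill_min (s : ℕ → ℝ) : ∀ (dem : ℝ) (l : List ℕ),
    l.Pairwise (fun a b => s b ≤ s a) → 0 < dem →
    ∀ j ∈ (takeFill s dem l).1, (((takeFill s dem l).1).map s).sum < dem + s j
  | dem, [], _, _ => by simp [takeFill_nil]
  | dem, a :: rest, hp, hd => by
    rw [takeFill_cons]
    split_ifs with hc
    · intro j hj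
      simp at hj; subst hj; simpa using hd
    · intro j hj
      push_neg at hc
      have hd' : 0 < dem - s a := by linarith
      have hp' := (List.pairwise_cons.mp hp).2
      have hmem := (List.pairwise_cons.mp hp).1
      have ih := takeFill_min s (dem - s a) rest hp' hd'
      simp only [List.mem_cons] at hj
      set q := takeFill s (dem - s a) rest with hq
      have happ : q.1 ++ q.2 = rest := takeFill_append s (dem - s a) rest
      have hsubq : ∀ x ∈ q.1, x ∈ rest := fun x hx => happ ▸ List.mem_append_left _ hx
      rcases hj with rfl | hj
      · rcases List.eq_nil_or_concat q.1 with hnil | ⟨l', b, hb⟩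
        · simp [hnil]; linarith
        · have hbmem : b ∈ q.1 := by simp [hb]
          have := ih b hbmem
          have hsb := hmem b (hsubq b hbmem)
          simp only [List.map_cons, List.sum_cons]
          linarith
      · have := ih j hj
        simp only [List.map_cons, List.sum_cons]
        linarith

lemma takeFill_three (s : ℕ → ℝ) (dem : ℝ) (l : List ℕ) (j1 j2 j3 : ℕ) (t : List ℕ)
    (h : (takeFill s dem l).1 = j1 :: j2 :: j3 :: t) : s j1 + s j2 < dem := by
  match l with
  | [] => simp [takeFill_nil] at h
  | a :: rest =>
    rw [takeFill_cons] at h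
    split_ifs at h with hc
    · simp at h
    · push_neg at hc
      simp only at h
      obtain ⟨rfl, h2⟩ : a = j1 ∧ (takeFill s (dem - s a) rest).1 = j2 :: j3 :: t := by
        exact ⟨(List.cons.injEq .. ▸ h).1, (List.cons.injEq .. ▸ h).2⟩
      match rest with
      | [] => simp [takeFill_nil] at h2
      | b :: rest2 =>
        rw [takeFill_cons] at h2
        split_ifs at h2 with hc2
        · simp at h2
        · push_neg at hc2
          obtain rfl : b = j2 := (List.cons.injEq .. ▸ h2).1
          linarith

lemma nfdAux_nil (d s : ℕ → ℝ) (items : List ℕ) (b : ℕ) : nfdAux d s [] items b = ∅ := rfl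

lemma nfdAux_cons (d s : ℕ → ℝ) (i : ℕ) (bins items : List ℕ) (b : ℕ) :
    nfdAux d s (i :: bins) items b =
      if d i ≤ (items.map s).sum then
        (if b = i then (takeFill s (d i) items).1.toFinset
         else nfdAux d s bins (takeFill s (d i) items).2 b)
      else
        (if b = i then ∅ else nfdAux d s bins items b) := rfl

lemma nfdAux_subset (d s : ℕ → ℝ) : ∀ (bl items : List ℕ) (b : ℕ),
    nfdAux d s bl items b ⊆ items.toFinset
  | [], _, _ => by simp [nfdAux_nil]
  | i :: bl, items, b => by
    rw [nfdAux_cons]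
    have happ := takeFill_append s (d i) items
    split_ifs with h1 h2 h3
    · intro x hx
      simp only [List.mem_toFinset] at hx ⊢
      rw [← happ]; exact List.mem_append_left _ hx
    · refine (nfdAux_subset d s bl _ b).trans ?_
      intro x hx
      simp only [List.mem_toFinset] at hx ⊢
      rw [← happ]; exact List.mem_append_right _ hx
    · simp
    · exact nfdAux_subset d s bl items b

/-- If every bin in `bl` gets the empty set, every bin demand exceeds the items sum. -/
lemma chain_skip (d s : ℕ → ℝ) : ∀ (bl items : List ℕ), bl.Nodup →
    (∀ i ∈ bl, 0 < d i) →
    (∀ i ∈ bl, nfdAux d s bl items i = ∅) →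
    ∀ i ∈ bl, (items.map s).sum < d i
  | [], _, _, _, _ => by simp
  | a :: bl, items, hnd, hd, hemp => by
    have ha := hemp a (by simp)
    rw [nfdAux_cons, if_pos rfl] at ha
    have hna : ¬ d a ≤ (items.map s).sum := by
      intro hc
      rw [if_pos hc] at ha
      have := takeFill_cover s (d a) items hc
      have hQnil : (takeFill s (d a) items).1 = [] := List.toFinset_eq_empty_iff _ |>.mp ha
      rw [hQnil] at this
      simp at this
      exact absurd (lt_of_lt_of_le (hd a (by simp)) this) (lt_irrefl 0)
    intro i hi
    rcases List.mem_cons.mp hi with rfl | hi'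
    · linarith [not_le.mp hna]
    · have : ∀ i' ∈ bl, nfdAux d s bl items i' = ∅ := by
        intro i' hi''
        have hne' : i' ≠ a := fun h => (List.nodup_cons.mp hnd).1 (h ▸ hi'')
        have := hemp i' (by simp [hi''])
        rwa [nfdAux_cons, if_neg hna, if_neg hne'] at this
      exact chain_skip d s bl items (List.nodup_cons.mp hnd).2
        (fun i' h => hd i' (by simp [h])) this i hi'

/-- Execution of NFD when all bins other than `istar` end up empty. -/
lemma nfd_run (d s : ℕ → ℝ) (istar : ℕ) : ∀ (bl1 bl2 items : List ℕ),
    (bl1 ++ istar :: bl2).Nodup →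
    (∀ i ∈ bl1 ++ istar :: bl2, 0 < d i) →
    (∀ i ∈ bl1 ++ istar :: bl2, i ≠ istar → nfdAux d s (bl1 ++ istar :: bl2) items i = ∅) →
    nfdAux d s (bl1 ++ istar :: bl2) items istar ≠ ∅ →
    d istar ≤ (items.map s).sum ∧
    nfdAux d s (bl1 ++ istar :: bl2) items istar = (takeFill s (d istar) items).1.toFinset ∧
    (∀ i ∈ bl1, (items.map s).sum < d i) ∧
    (∀ i ∈ bl2, (((takeFill s (d istar) items).2).map s).sum < d i)
  | [], bl2, items, hnd, hd, hemp, hne => by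
    simp only [List.nil_append] at *
    have hcov : d istar ≤ (items.map s).sum := by
      by_contra hc
      exact hne (by rw [nfdAux_cons, if_neg hc, if_pos rfl])
    refine ⟨hcov, by rw [nfdAux_cons, if_pos hcov, if_pos rfl], by simp, ?_⟩
    have hskip : ∀ i ∈ bl2, nfdAux d s bl2 (takeFill s (d istar) items).2 i = ∅ := by
      intro i hi
      have hnei : i ≠ istar := fun h => (List.nodup_cons.mp hnd).1 (h ▸ hi)
      have := hemp i (by simp [hi]) hnei
      rwa [nfdAux_cons, if_pos hcov, if_neg hnei] at this
    exact chain_skip d s bl2 _ (List.nodup_cons.mp hnd).2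
      (fun i h => hd i (by simp [h])) hskip
  | a :: bl1, bl2, items, hnd, hd, hemp, hne => by
    have hnd0 : (a :: (bl1 ++ istar :: bl2)).Nodup := by simpa using hnd
    have hanotin : a ∉ bl1 ++ istar :: bl2 := (List.nodup_cons.mp hnd0).1
    have hna : a ≠ istar := fun h => hanotin (by simp [h])
    have ha := hemp a (by simp) hna
    rw [List.cons_append, nfdAux_cons, if_pos rfl] at ha
    have hnc : ¬ d a ≤ (items.map s).sum := by
      intro hc
      rw [if_pos hc] at ha
      have := takeFill_cover s (d a) items hc
      have hQnil : (takeFill s (d a) items).1 = [] := List.toFinset_eq_empty_iff _ |>.mp ha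
      rw [hQnil] at this; simp at this
      exact absurd (lt_of_lt_of_le (hd a (by simp)) this) (lt_irrefl 0)
    have hrw : ∀ b, b ≠ a → nfdAux d s ((a :: bl1) ++ istar :: bl2) items b
        = nfdAux d s (bl1 ++ istar :: bl2) items b := by
      intro b hb
      rw [List.cons_append, nfdAux_cons, if_neg hnc, if_neg hb]
    have hnd' : (bl1 ++ istar :: bl2).Nodup := (List.nodup_cons.mp hnd0).2
    have ih := nfd_run d s istar bl1 bl2 items hnd'
      (fun i h => hd i (by simp [List.mem_cons]; right; simpa using h))
      (fun i h hi => by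
        rw [← hrw i (fun hh => hanotin (hh ▸ h))]
        exact hemp i (by simp [List.mem_cons]; right; simpa using h) hi)
      (by rw [← hrw istar (Ne.symm hna)] at *; exact hne)
    refine ⟨ih.1, by rw [hrw istar (Ne.symm hna)]; exact ih.2.1, ?_, ih.2.2.2⟩
    intro i hi
    rcases List.mem_cons.mp hi with rfl | hi'
    · linarith [not_le.mp hnc]
    · exact ih.2.2.1 i hi'

lemma range_decomp (istar m : ℕ) (h : istar < m) :
    List.range m = List.range istar ++ istar :: List.range' (istar+1) (m - (istar+1)) := by
  have h2 := @List.range'_append 0 istar (m - istar) 1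
  simp only [Nat.one_mul, Nat.zero_add] at h2
  have h3 : List.range' istar (m - istar) = istar :: List.range' (istar+1) (m - (istar+1)) := by
    have he : m - istar = (m - (istar+1)) + 1 := by omega
    rw [he, List.range'_succ]
  rw [show istar + (m - istar) = m from by omega] at h2
  rw [List.range_eq_range', ← h2, h3, ← List.range_eq_range']

lemma toFinset_list_range (n : ℕ) : (List.range n).toFinset = Finset.range n := by
  ext x; simp

lemma sum_range_eq_list (f : ℕ → ℝ) (n : ℕ) :
    ∑ j ∈ Finset.range n, f j = ((List.range n).map f).sum := by
  rw [← toFinset_list_range, List.sum_toFinset f (List.nodup_range (n := n))]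

/- STATEMENT 13 -/
theorem stmt13 (m n : ℕ) (d s : ℕ → ℝ)
    (hd : ∀ i < m, 0 < d i) (hdm : ∀ i i', i ≤ i' → i' < m → d i' ≤ d i)
    (hs : ∀ j < n, 0 < s j) (hsm : ∀ j j', j ≤ j' → j' < n → s j' ≤ s j)
    (hone : ((Finset.range m).filter (WellCovered d s m (Finset.range n))).card = 1)
    (hrest : ∀ i < m, ¬ WellCovered d s m (Finset.range n) i →
      nfdU d s (Finset.range m) (Finset.range n) i = 0) :
    OPT d d s (Finset.range m) (Finset.range n) ≤
      9 / 4 * NFD d s (Finset.range m) (Finset.range n) := by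
  classical
  obtain ⟨istar, hfilt⟩ := Finset.card_eq_one.mp hone
  have histar_mem : istar ∈ (Finset.range m).filter (WellCovered d s m (Finset.range n)) := by
    rw [hfilt]; exact Finset.mem_singleton_self istar
  have hWC : WellCovered d s m (Finset.range n) istar := (Finset.mem_filter.mp histar_mem).2
  obtain ⟨him, hupos, i', hii', hi'm, -, -, -⟩ := hWC
  have histar1m : istar + 1 < m := by omega
  set L := List.range n with hLdef
  have hsol : nfdSol d s (Finset.range m) (Finset.range n) = nfdAux d s (List.range m) L := by
    rw [nfdSol, Finset.sort_range, Finset.sort_range]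
  have spos : ∀ j ∈ L, 0 < s j := fun j hj => hs j (List.mem_range.mp hj)
  have hsolsub : ∀ b, nfdSol d s (Finset.range m) (Finset.range n) b ⊆ Finset.range n := by
    intro b; rw [hsol]
    refine (nfdAux_subset d s _ L b).trans ?_
    rw [hLdef, toFinset_list_range]
  have hsol_empty : ∀ i < m, i ≠ istar → nfdSol d s (Finset.range m) (Finset.range n) i = ∅ := by
    intro i him2 hne
    have hnw : ¬ WellCovered d s m (Finset.range n) i := by
      intro hw
      have : i ∈ ({istar} : Finset ℕ) :=
        hfilt ▸ Finset.mem_filter.mpr ⟨Finset.mem_range.mpr him2, hw⟩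
      exact hne (Finset.mem_singleton.mp this)
    have hz := hrest i him2 hnw
    by_contra hne'
    have hpos : 0 < nfdU d s (Finset.range m) (Finset.range n) i := by
      rw [nfdU]
      refine Finset.sum_pos ?_ (Finset.nonempty_iff_ne_empty.mpr hne')
      intro x hx
      exact hs x (Finset.mem_range.mp (hsolsub i hx))
    rw [hz] at hpos; exact lt_irrefl 0 hpos
  have hsol_ne : nfdSol d s (Finset.range m) (Finset.range n) istar ≠ ∅ := by
    intro h
    rw [nfdU, h] at hupos; simp at hupos
  set bl1 := List.range istar with hbl1
  set bl2 := List.range' (istar+1) (m - (istar+1)) with hbl2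
  have hdecomp : List.range m = bl1 ++ istar :: bl2 := range_decomp istar m (by omega)
  have hnd : (bl1 ++ istar :: bl2).Nodup := hdecomp ▸ List.nodup_range (n := m)
  have hmemlist : ∀ i ∈ bl1 ++ istar :: bl2, i < m := by
    intro i hi; rw [← hdecomp] at hi; exact List.mem_range.mp hi
  have hrun := nfd_run d s istar bl1 bl2 L hnd
    (fun i hi => hd i (hmemlist i hi))
    (fun i hi hne => by
      rw [← hdecomp, ← hsol]; exact hsol_empty i (hmemlist i hi) hne)
    (by rw [← hdecomp, ← hsol]; exact hsol_ne)
  obtain ⟨hcov, hQeq, hbefore, hafter⟩ := hrun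
  set Q := (takeFill s (d istar) L).1 with hQdef
  set rest := (takeFill s (d istar) L).2 with hrestdef
  have happ : Q ++ rest = L := takeFill_append s (d istar) L
  have hLnd : L.Nodup := List.nodup_range (n := n)
  have hQRnd : (Q ++ rest).Nodup := by rw [happ]; exact hLnd
  have hQnd : Q.Nodup := hQRnd.sublist (List.sublist_append_left Q rest)
  have hrnd : rest.Nodup := hQRnd.sublist (List.sublist_append_right Q rest)
  have hQsubL : ∀ x ∈ Q, x ∈ L := fun x hx => happ ▸ List.mem_append_left rest hx
  have hrsubL : ∀ x ∈ rest, x ∈ L := fun x hx => happ ▸ List.mem_append_right Q hx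
  set uval := (Q.map s).sum with huvaldef
  set R := (rest.map s).sum with hRdef
  have hT : (L.map s).sum = uval + R := by rw [← happ]; simp; rfl
  have hu_ge : d istar ≤ uval := takeFill_cover s (d istar) L hcov
  have hR_nonneg : 0 ≤ R := by
    refine List.sum_nonneg ?_
    intro x hx
    obtain ⟨j, hj, rfl⟩ := List.mem_map.mp hx
    exact (spos j (hrsubL j hj)).le
  have hR_lt : ∀ i, istar < i → i < m → R < d i := by
    intro i h1 h2
    exact hafter i (List.mem_range'_1.mpr ⟨by omega, by omega⟩)
  have hR_lt_star : R < d istar :=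
    lt_of_lt_of_le (hR_lt (istar+1) (by omega) histar1m)
      (hdm istar (istar+1) (by omega) histar1m)
  have hT_lt : ∀ i, i < istar → (L.map s).sum < d i :=
    fun i hi => hbefore i (List.mem_range.mpr hi)
  have hsolistar : nfdSol d s (Finset.range m) (Finset.range n) istar = Q.toFinset := by
    rw [hsol, hdecomp]; exact hQeq
  have hD := hd istar him
  have hNFD : NFD d s (Finset.range m) (Finset.range n) = d istar := by
    rw [NFD, profit]
    rw [Finset.sum_eq_single_of_mem istar (Finset.mem_range.mpr him)]
    · rw [if_pos]
      rw [hsolistar, List.sum_toFinset s hQnd]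
      exact hu_ge
    · intro b hb hne
      rw [hsol_empty b (Finset.mem_range.mp hb) hne]
      simp only [Finset.sum_empty]
      exact if_neg (not_le.mpr (hd b (Finset.mem_range.mp hb)))
  have hmain : ∀ S : ℕ → Finset ℕ, IsSolution (Finset.range n) S →
      profit d d s (Finset.range m) S ≤ 9/4 * d istar := by
    intro S hS
    obtain ⟨hsub, hdisj⟩ := hS
    set C := (Finset.range m).filter (fun i => d i ≤ ∑ j ∈ S i, s j) with hCdef
    have hprofit : profit d d s (Finset.range m) S = ∑ i ∈ C, d i := by
      rw [profit, hCdef, Finset.sum_filter]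
    have snn : ∀ j ∈ Finset.range n, 0 ≤ s j := fun j hj => (hs j (Finset.mem_range.mp hj)).le
    have hTfin : ∑ j ∈ Finset.range n, s j = (L.map s).sum := sum_range_eq_list s n
    have hSle : ∀ i, ∑ j ∈ S i, s j ≤ (L.map s).sum := by
      intro i
      rw [← hTfin]
      exact Finset.sum_le_sum_of_subset_of_nonneg (hsub i) (fun j hj _ => snn j hj)
    have hCmem : ∀ i ∈ C, i < m ∧ d i ≤ ∑ j ∈ S i, s j := fun i hi =>
      ⟨Finset.mem_range.mp (Finset.mem_filter.mp hi).1, (Finset.mem_filter.mp hi).2⟩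
    have hCge : ∀ i ∈ C, istar ≤ i := by
      intro i hi
      by_contra hlt
      have h1 := (hCmem i hi).2
      have h2 := hT_lt i (by omega)
      linarith [hSle i]
    have hdleD : ∀ i ∈ C, d i ≤ d istar := fun i hi => hdm istar i (hCge i hi) (hCmem i hi).1
    have hRC : ∀ i ∈ C, R < d i := by
      intro i hi
      rcases eq_or_lt_of_le (hCge i hi) with h | h
      · rw [← h]; exact hR_lt_star
      · exact hR_lt i h (hCmem i hi).1
    have hdisjC : (↑C : Set ℕ).PairwiseDisjoint S := fun i _ j _ hij => hdisj hij
    have hPT : ∑ i ∈ C, d i ≤ uval + R := by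
      calc ∑ i ∈ C, d i ≤ ∑ i ∈ C, ∑ j ∈ S i, s j :=
            Finset.sum_le_sum (fun i hi => (hCmem i hi).2)
        _ = ∑ j ∈ C.biUnion S, s j := (Finset.sum_biUnion hdisjC).symm
        _ ≤ ∑ j ∈ Finset.range n, s j := by
            refine Finset.sum_le_sum_of_subset_of_nonneg ?_ (fun j hj _ => snn j hj)
            intro x hx
            obtain ⟨i, hi, hxi⟩ := Finset.mem_biUnion.mp hx
            exact hsub i hxi
        _ = uval + R := by rw [hTfin, hT]
    rw [hprofit]
    by_cases hcard : C.card ≤ 2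
    · have hsum := Finset.sum_le_card_nsmul C d (d istar) hdleD
      rw [nsmul_eq_mul] at hsum
      have h2 : (C.card : ℝ) ≤ 2 := by exact_mod_cast hcard
      nlinarith
    · push_neg at hcard
      have hcard3 : 3 ≤ C.card := hcard
      have hinter : ∀ i ∈ C, (S i ∩ Q.toFinset).Nonempty := by
        intro i hi
        by_contra hempty
        rw [Finset.not_nonempty_iff_eq_empty] at hempty
        have hsubrest : S i ⊆ rest.toFinset := by
          intro x hx
          have hxL : x ∈ L := List.mem_range.mpr (Finset.mem_range.mp (hsub i hx))
          rw [← happ] at hxL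
          rcases List.mem_append.mp hxL with h | h
          · exact absurd (Finset.mem_inter.mpr ⟨hx, List.mem_toFinset.mpr h⟩)
              (by rw [hempty]; simp)
          · exact List.mem_toFinset.mpr h
        have h1 : ∑ j ∈ S i, s j ≤ R := by
          calc ∑ j ∈ S i, s j ≤ ∑ j ∈ rest.toFinset, s j :=
                Finset.sum_le_sum_of_subset_of_nonneg hsubrest
                  (fun j hj _ => (spos j (hrsubL j (List.mem_toFinset.mp hj))).le)
            _ = R := List.sum_toFinset s hrnd
        linarith [(hCmem i hi).2, hRC i hi]
      set f : ℕ → ℕ := fun i =>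
        if h : (S i ∩ Q.toFinset).Nonempty then h.choose else 0 with hfdef
      have hfmem : ∀ i ∈ C, f i ∈ S i ∩ Q.toFinset := by
        intro i hi
        have := (hinter i hi).choose_spec
        simp only [hfdef, dif_pos (hinter i hi)]
        exact this
      have hinj : Set.InjOn f ↑C := by
        intro i hi j hj hij
        by_contra hne
        have h1 := Finset.mem_inter.mp (hfmem i hi)
        have h2 := Finset.mem_inter.mp (hfmem j hj)
        have hdis := hdisj hne
        exact (Finset.disjoint_left.mp hdis h1.1) (hij ▸ h2.1)
      have hcardQ : 3 ≤ Q.toFinset.card :=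
        le_trans hcard3 (Finset.card_le_card_of_injOn f
          (fun i hi => (Finset.mem_inter.mp (hfmem i hi)).2) hinj)
      have hQlen : 3 ≤ Q.length := by
        rw [← List.toFinset_card_of_nodup hQnd]; exact hcardQ
      obtain ⟨j1, j2, j3, t, hQform⟩ : ∃ j1 j2 j3 t, Q = j1 :: j2 :: j3 :: t := by
        match hq : Q, hQlen with
        | a :: b :: c :: t, _ => exact ⟨a, b, c, t, rfl⟩
      have hs12 : s j1 + s j2 < d istar :=
        takeFill_three s (d istar) L j1 j2 j3 t (hQdef ▸ hQform)
      have hLpair : L.Pairwise (fun a b => s b ≤ s a) := by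
        refine List.Pairwise.imp_of_mem ?_ (List.pairwise_lt_range (n := n))
        intro a b ha hb hab
        exact hsm a b hab.le (List.mem_range.mp hb)
      have hQpair : Q.Pairwise (fun a b => s b ≤ s a) :=
        (happ ▸ hLpair : (Q ++ rest).Pairwise _).sublist (List.sublist_append_left Q rest)
      have hs21 : s j2 ≤ s j1 := by
        rw [hQform] at hQpair
        exact (List.pairwise_cons.mp hQpair).1 j2 (by simp)
      have hj2Q : j2 ∈ Q := by rw [hQform]; simp
      have huval_lt : uval < d istar + s j2 :=
        takeFill_min s (d istar) L hLpair hD j2 hj2Q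
      have hCne : C.Nonempty := Finset.card_pos.mp (by omega)
      have h3R : (C.card : ℝ) * R < ∑ i ∈ C, d i := by
        have hlt := Finset.sum_lt_sum_of_nonempty hCne hRC
        rwa [Finset.sum_const, nsmul_eq_mul] at hlt
      have hcard3' : (3:ℝ) ≤ (C.card:ℝ) := by exact_mod_cast hcard3
      have h3R' : 3 * R < ∑ i ∈ C, d i := lt_of_le_of_lt (by nlinarith) h3R
      linarith
  rw [OPT, hNFD]
  refine Real.sSup_le ?_ (by linarith)
  rintro v ⟨S, hSmem, rfl⟩
  exact hmain S hSmem


end BinCov
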